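/- Let Λ be a diamond domain, Δ = Δ(Λ) and i, j ∈ {+,−}. For every superimposed configuration η ∈ Ω^{SI,11}_Δ, the number of spin configurations σ ∈ Ω^{spin,ij}_Λ compatible with η equals 2^{k_Δ(η) − 2}, where k_Δ(η) = k_Δ(η⁰) + k_Δ(η¹) is the total number of clusters of η⁰ (in 𝕃) and of η¹ (in 𝕃*) containing a vertex incident to an edge of Δ. -/

import Mathlib

open MeasureTheory Filter Topology
open scoped ENNReal

namespace SixVertex

/-- Vertices of `ℤ²`. -/
abbrev Vx : Type := ℤ × ℤ
/-- Faces of `ℤ²`, i.e. elements of `(ℤ²)* = ℤ² + (1/2,1/2)`; the face `p` corresponds to the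
point `p + (1/2,1/2)`, i.e. to the unit square with corners `p`, `p+(1,0)`, `p+(0,1)`, `p+(1,1)`. -/
abbrev Face : Type := ℤ × ℤ

/-- `ℓ¹` (= graph) distance between faces in `(ℤ²)*`. -/
def fdist (p q : Face) : ℕ := (p.1 - q.1).natAbs + (p.2 - q.2).natAbs

/-- `ℓ¹` (= graph) distance between vertices of `ℤ²`. -/
def vdist (x y : Vx) : ℕ := (x.1 - y.1).natAbs + (x.2 - y.2).natAbs

/-- Adjacency in `ℤ²` (or in `(ℤ²)*`). -/
def VAdj (x y : Vx) : Prop := vdist x y = 1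

/-- The diagonal edges `E(𝕃) ∪ E(𝕃*)`, encoded as pairs `(x, b)` where `x ∈ ℤ²` is the vertex
of `ℤ²` the edge passes through, and `b` tells which of the two diagonals at `x` it is.
The cross at a vertex `x` consists of the two edges `(x, false)` and `(x, true)`. -/
abbrev Edge : Type := Vx × Bool

/-- The two endpoints (faces) of a diagonal edge: `(x, false)` joins the faces `x - (1,1)` and
`x` (the two faces at `x` of the parity of `x`), while `(x, true)` joins `x - (1,0)` and
`x - (0,1)`. -/
def ep (e : Edge) : Face × Face :=
  if e.2 then (e.1 - (1, 0), e.1 - (0, 1)) else (e.1 - (1, 1), e.1)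

/-- The edge `e` belongs to `E(𝕃)` (otherwise it belongs to `E(𝕃*)`). -/
def inL (e : Edge) : Prop := (Even (e.1.1 + e.1.2) ↔ e.2 = false)

/-- Configurations `η ∈ {0,1}^{E(𝕃) ∪ E(𝕃*)}` (the pair `(η⁰, η¹)` is encoded as a single
function on all diagonal edges). -/
abbrev SIConf : Type := Edge → Bool

/-- The cross at `x` is open in `η`. -/
def OpenCross (η : SIConf) (x : Vx) : Prop := η (x, false) = true ∧ η (x, true) = true

/-- No cross is closed in `η`, i.e. `η` is a superimposed configuration (`η ∈ Ω^SI`). -/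
def NoClosedCross (η : SIConf) : Prop := ∀ x : Vx, η (x, false) = true ∨ η (x, true) = true

/-- Two faces joined by an open edge of `η`. -/
def OpenAdj (η : SIConf) (p q : Face) : Prop :=
  ∃ e : Edge, η e = true ∧ (ep e = (p, q) ∨ ep e = (q, p))

/-- Connectivity by open paths. -/
def ConnectedIn (η : SIConf) : Face → Face → Prop := Relation.ReflTransGen (OpenAdj η)

/-- The cluster of the face `p` in `η`. -/
def cluster (η : SIConf) (p : Face) : Set Face := {q | ConnectedIn η p q}

/-- The face `p` is incident to some edge of `Δ`. -/
def TouchesDelta (Δ : Set Edge) (p : Face) : Prop := ∃ e ∈ Δ, (ep e).1 = p ∨ (ep e).2 = p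

/-- `N_Δ(η)`: the number of open crosses of `η` having an edge in `Δ`. -/
noncomputable def NDelta (Δ : Set Edge) (η : SIConf) : ℕ :=
  Set.ncard {x : Vx | OpenCross η x ∧ ((x, false) ∈ Δ ∨ (x, true) ∈ Δ)}

/-- `k_Δ(η) = k_Δ(η⁰) + k_Δ(η¹)`: the total number of clusters of `η` (equivalently, of `η⁰`
in `𝕃` plus those of `η¹` in `𝕃*`, since open edges never join faces of different parity)
containing a face incident to an edge of `Δ`. -/
noncomputable def kDelta (Δ : Set Edge) (η : SIConf) : ℕ :=
  Set.ncard {C : Set Face | ∃ p : Face, TouchesDelta Δ p ∧ C = cluster η p}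

/-- `η` is a superimposed configuration agreeing with `τ` off `Δ` (`η ∈ Ω^{SI,τ}_Δ`). -/
def SIok (Δ : Set Edge) (τ : SIConf) (η : SIConf) : Prop :=
  NoClosedCross η ∧ ∀ e ∉ Δ, η e = τ e

/-- The weight `α^{N_Δ(η)} q^{k_Δ(η)}` of the superimposed model. -/
noncomputable def SIweight (Δ : Set Edge) (α q : ℝ) (η : SIConf) : ℝ≥0∞ :=
  ENNReal.ofReal (α ^ NDelta Δ η * q ^ kDelta Δ η)

/-- The finite-volume superimposed measure `P^{SI,τ}_{Δ,α,q}`. -/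
noncomputable def SIfin (Δ : Set Edge) (α q : ℝ) (τ : SIConf) : Measure SIConf :=
  (∑' η : {η : SIConf // SIok Δ τ η}, SIweight Δ α q η.1)⁻¹ •
    Measure.sum (fun η : {η : SIConf // SIok Δ τ η} => SIweight Δ α q η.1 • Measure.dirac η.1)

/-- The all-open ("wired-wired", `11`) boundary condition. -/
def wiredwired : SIConf := fun _ => true

/-! ### Diamond domains -/

/-- The diamond `Λ = {u : dist(u,v) ≤ n}` of faces. -/
def diamond (v : Face) (n : ℕ) : Set Face := {u | fdist u v ≤ n}

/-- `(v, n)` determines a diamond domain: `v ∈ 𝕃` and `n` a positive even integer. -/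
def IsDiamond (v : Face) (n : ℕ) : Prop := Even (v.1 + v.2) ∧ 0 < n ∧ Even n

/-- The edge of `E(𝕃)` in the cross at `x`. -/
def LEdgeAt (x : Vx) : Edge := if Even (x.1 + x.2) then (x, false) else (x, true)

/-- `Δ(Λ)`: edges of `𝕃` with both endpoints in `Λ`, together with their dual edges
(equivalently: the full crosses whose `𝕃`-edge has both endpoints in `Λ`). -/
def deltaOf (v : Face) (n : ℕ) : Set Edge :=
  {e | (ep (LEdgeAt e.1)).1 ∈ diamond v n ∧ (ep (LEdgeAt e.1)).2 ∈ diamond v n}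

/-! ### Spin configurations -/

/-- Spin configurations on the faces; `true` is the spin `+`, `false` the spin `-`. -/
abbrev SpinConf : Type := Face → Bool

/-- The ice rule: at each vertex of `ℤ²`, at least one of the two diagonals consists of
equal spins. -/
def IceRule (σ : SpinConf) : Prop :=
  ∀ x : Vx, σ (x - (1, 1)) = σ x ∨ σ (x - (1, 0)) = σ (x - (0, 1))

/-- `x` is a saddle point of `σ`: both diagonals at `x` have constant spin. -/
def Saddle (σ : SpinConf) (x : Vx) : Prop :=
  σ (x - (1, 1)) = σ x ∧ σ (x - (1, 0)) = σ (x - (0, 1))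

/-- The face `p` is incident to the vertex `x` of `ℤ²` (i.e. `x` is a corner of `p`). -/
def FaceInc (p : Face) (x : Vx) : Prop :=
  ∃ a ∈ ({0, 1} : Set ℤ), ∃ b ∈ ({0, 1} : Set ℤ), p = x - (a, b)

/-- Vertices of `𝛬̂`: vertices of `ℤ²` on or inside the circuit `∂†Λ`, i.e. corners of
faces of `Λ`. -/
def HatVert (v : Face) (n : ℕ) (x : Vx) : Prop := ∃ p ∈ diamond v n, FaceInc p x

/-- Internal vertices of `𝛬̂`: vertices all of whose four incident `ℤ²`-edges belong to the
induced subgraph `𝛬̂`. -/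
def InternalVert (v : Face) (n : ℕ) (x : Vx) : Prop :=
  HatVert v n x ∧ ∀ y : Vx, VAdj x y → HatVert v n y

/-- `#saddle_Λ(σ)`: the number of saddle points of `σ` among internal vertices of `𝛬̂`. -/
noncomputable def saddleCount (v : Face) (n : ℕ) (σ : SpinConf) : ℕ :=
  Set.ncard {x : Vx | InternalVert v n x ∧ Saddle σ x}

/-- `Ω^{spin,ij}_Λ`: spin configurations satisfying the ice rule, equal to `i` on the outer
boundary of `Λ` and on all of `𝕃*` outside `Λ`, and equal to `j` on the inner boundary of `Λ`
and on all of `𝕃` outside `Λ`.  (All faces at distance `≥ n` from the center receive the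
boundary spin of their sublattice.) -/
def OmegaSpin (v : Face) (n : ℕ) (i j : Bool) (σ : SpinConf) : Prop :=
  IceRule σ ∧ ∀ p : Face, n ≤ fdist p v → σ p = (if Even (p.1 + p.2) then j else i)

/-- The weight `c^{#saddle_Λ(σ)}`. -/
noncomputable def spinWeight (v : Face) (n : ℕ) (c : ℝ) (σ : SpinConf) : ℝ≥0∞ :=
  ENNReal.ofReal (c ^ saddleCount v n σ)

/-- The finite-volume spin measure `P^{spin,ij}_{Λ,c}`. -/
noncomputable def spinFin (v : Face) (n : ℕ) (c : ℝ) (i j : Bool) : Measure SpinConf :=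
  (∑' σ : {σ : SpinConf // OmegaSpin v n i j σ}, spinWeight v n c σ.1)⁻¹ •
    Measure.sum (fun σ : {σ : SpinConf // OmegaSpin v n i j σ} =>
      spinWeight v n c σ.1 • Measure.dirac σ.1)

/-- Compatibility `σ ∼ η`: every open edge of `η` has endpoints with equal spins. -/
def Compat (σ : SpinConf) (η : SIConf) : Prop :=
  ∀ e : Edge, η e = true → σ (ep e).1 = σ (ep e).2

/-! ### Bernoulli site percolation on `ℤ²` and its critical probability -/

/-- `ν` is the law of i.i.d. Bernoulli(`p`) site percolation on `ℤ²`. -/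
def IsBernoulliField (p : ℝ) (ν : Measure (Vx → Bool)) : Prop :=
  IsProbabilityMeasure ν ∧
    ∀ (S : Finset Vx) (s : Vx → Bool),
      ν {ω | ∀ x ∈ S, ω x = s x} =
        ∏ x ∈ S, (if s x = true then ENNReal.ofReal p else ENNReal.ofReal (1 - p))

/-- Site-percolation adjacency: neighbouring open sites. -/
def SiteOpenAdj (ω : Vx → Bool) (x y : Vx) : Prop := VAdj x y ∧ ω x = true ∧ ω y = true

/-- The open cluster of a site. -/
def siteCluster (ω : Vx → Bool) (x : Vx) : Set Vx :=
  {y | Relation.ReflTransGen (SiteOpenAdj ω) x y}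

/-- The critical probability `p_c` of Bernoulli site percolation on `ℤ²`: the supremum of
`p ∈ [0,1]` for which Bernoulli(`p`) site percolation a.s. has no infinite open cluster. -/
noncomputable def pcSite : ℝ :=
  sSup {p : ℝ | 0 ≤ p ∧ p ≤ 1 ∧ ∀ ν : Measure (Vx → Bool), IsBernoulliField p ν →
    ν {ω | ∃ x, ω x = true ∧ (siteCluster ω x).Infinite} = 0}

/-! ### Infinite-volume limits -/

/-- A sequence of diamond domains increasing to `(ℤ²)*`. -/
def DiamondExhaustion (v : ℕ → Face) (n : ℕ → ℕ) : Prop :=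
  (∀ k, IsDiamond (v k) (n k)) ∧
  (∀ k, diamond (v k) (n k) ⊆ diamond (v (k + 1)) (n (k + 1))) ∧
  (∀ u : Face, ∃ k, u ∈ diamond (v k) (n k))

/-- `P` is the weak limit of the finite-volume superimposed measures with boundary condition
`τ` along any sequence of diamond domains increasing to `(ℤ²)*`. -/
def IsSILimitFor (α q : ℝ) (τ : SIConf) (P : Measure SIConf) : Prop :=
  ∀ (v : ℕ → Face) (n : ℕ → ℕ), DiamondExhaustion v n →
    ∀ f : SIConf → ℝ, Continuous f → (∃ M, ∀ η, |f η| ≤ M) →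
      Tendsto (fun k => ∫ η, f η ∂(SIfin (deltaOf (v k) (n k)) α q τ)) atTop
        (nhds (∫ η, f η ∂P))

/-- `P` is the infinite-volume superimposed measure `P^{SI}_{α,q}`: the common weak limit of
the finite-volume measures over all boundary conditions. -/
def IsSILimit (α q : ℝ) (P : Measure SIConf) : Prop :=
  IsProbabilityMeasure P ∧ ∀ τ : SIConf, NoClosedCross τ → IsSILimitFor α q τ P

/-- `P` is the weak limit `P^{spin,ij}_c` of the finite-volume spin measures along any
sequence of diamond domains increasing to `(ℤ²)*`. -/
def IsSpinLimit (c : ℝ) (i j : Bool) (P : Measure SpinConf) : Prop :=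
  IsProbabilityMeasure P ∧
    ∀ (v : ℕ → Face) (n : ℕ → ℕ), DiamondExhaustion v n →
      ∀ f : SpinConf → ℝ, Continuous f → (∃ M, ∀ σ, |f σ| ≤ M) →
        Tendsto (fun k => ∫ σ, f σ ∂(spinFin (v k) (n k) c i j)) atTop (nhds (∫ σ, f σ ∂P))

end SixVertex

/-!
A spin configuration compatible with `η` is constant on the clusters of `η`; conversely any
assignment of spins to clusters is compatible, and it satisfies the ice rule because no cross of
`η` is closed. Off `Δ(Λ)` every edge is open. Rotating by 45°, the faces of one parity far from
the centre become the complement of a square in `ℤ²`, which is connected, so all even faces at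
distance `≥ n` lie in a single cluster, and so do all odd ones. The boundary conditions thus only
fix the spins of these two distinct clusters, both of which touch `Δ`, and every other cluster
touches `Δ` too; the remaining `k_Δ(η) - 2` clusters carry free spins.
-/

theorem Nat.card_subtype_apply_eq_and_apply_eq {Q β : Type*} [Finite Q] {a b : Q} (hab : a ≠ b)
    (x y : β) :
    Nat.card {f : Q → β // f a = x ∧ f b = y} = Nat.card β ^ (Nat.card Q - 2) := by
  classical
  let f₀ : ({a, b} : Set Q) → β := fun c => if c.1 = a then x else y
  have hfix : ∀ f : Q → β, f ∘ Subtype.val = f₀ ↔ f a = x ∧ f b = y := fun f => by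
    simp only [funext_iff, Function.comp_apply, Subtype.forall, Set.mem_insert_iff,
      Set.mem_singleton_iff, f₀]
    grind
  calc Nat.card {f : Q → β // f a = x ∧ f b = y}
      = Nat.card ({c // c ∉ ({a, b} : Set Q)} → β) :=
        Nat.card_congr ((Equiv.subtypeEquivRight hfix).symm.trans (Equiv.subtypePreimage _ f₀))
    _ = Nat.card β ^ (Nat.card Q - 2) := by
        rw [Nat.card_fun, ← Set.ncard_pair hab, ← Set.ncard_compl]; rfl

theorem Setoid.card_subtype_le_ker_and_apply_eq {α β : Type*} (r : Setoid α)
    [Finite (Quotient r)] {a b : α} (hab : ¬ r a b) (x y : β) :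
    Nat.card {f : α → β // r ≤ Setoid.ker f ∧ f a = x ∧ f b = y} =
      Nat.card β ^ (Nat.card (Quotient r) - 2) := by
  have hne : (⟦a⟧ : Quotient r) ≠ ⟦b⟧ := fun h => hab (Quotient.exact h)
  rw [← Nat.card_subtype_apply_eq_and_apply_eq hne x y]
  exact Nat.card_congr ((Equiv.subtypeSubtypeEquivSubtypeInter _ _).symm.trans
    ((Setoid.liftEquiv r).subtypeEquiv fun _ => Iff.rfl))

theorem Relation.reflTransGen_of_forall_int_step {α : Type*} {R : α → α → Prop} (f : ℤ → α)
    {s t : ℤ}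
    (h : ∀ k ∈ Set.Ico (min s t) (max s t), R (f k) (f (k + 1)) ∧ R (f (k + 1)) (f k)) :
    Relation.ReflTransGen R (f s) (f t) := by
  refine Relation.ReflTransGen.lift f (fun _ _ h => h) _ _ <|
    reflTransGen_of_succ (fun k l => R (f k) (f l)) (fun k hk => ?_) (fun k hk => ?_)
  · simpa using (h k (Set.Ico_subset_Ico (min_le_left s t) (le_max_right s t) hk)).1
  · simpa using (h k (Set.Ico_subset_Ico (min_le_right s t) (le_max_left s t) hk)).2

namespace SixVertex

open Relation

section Box

variable {R : ℤ × ℤ → ℤ × ℤ → Prop} {lo hi : ℤ}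

theorem mk_mem_Icc_iff {s t : ℤ} :
    (s, t) ∈ Set.Icc (lo, lo) (hi, hi) ↔ lo ≤ s ∧ s ≤ hi ∧ lo ≤ t ∧ t ≤ hi := by
  simp only [Set.mem_Icc, Prod.mk_le_mk]; tauto

theorem reflTransGen_row
    (hR : ∀ a ∉ Set.Icc (lo, lo) (hi, hi), ∀ b ∉ Set.Icc (lo, lo) (hi, hi), VAdj a b → R a b)
    (t s s' : ℤ) (hout : ∀ k, min s s' ≤ k → k ≤ max s s' → t < lo ∨ hi < t ∨ k < lo ∨ hi < k) :
    ReflTransGen R (s, t) (s', t) :=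
  Relation.reflTransGen_of_forall_int_step (fun k => (k, t)) fun k hk => by
    have h₁ : (k, t) ∉ Set.Icc (lo, lo) (hi, hi) := by
      rw [mk_mem_Icc_iff]; have := hout k hk.1 hk.2.le; omega
    have h₂ : (k + 1, t) ∉ Set.Icc (lo, lo) (hi, hi) := by
      rw [mk_mem_Icc_iff]; have := hout (k + 1) (by linarith [hk.1]) (by linarith [hk.2]); omega
    exact ⟨hR _ h₁ _ h₂ (by simp [VAdj, vdist]), hR _ h₂ _ h₁ (by simp [VAdj, vdist])⟩

theorem reflTransGen_column
    (hR : ∀ a ∉ Set.Icc (lo, lo) (hi, hi), ∀ b ∉ Set.Icc (lo, lo) (hi, hi), VAdj a b → R a b)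
    (s t t' : ℤ) (hout : ∀ k, min t t' ≤ k → k ≤ max t t' → s < lo ∨ hi < s ∨ k < lo ∨ hi < k) :
    ReflTransGen R (s, t) (s, t') :=
  Relation.reflTransGen_of_forall_int_step (fun k => (s, k)) fun k hk => by
    have h₁ : (s, k) ∉ Set.Icc (lo, lo) (hi, hi) := by
      rw [mk_mem_Icc_iff]; have := hout k hk.1 hk.2.le; omega
    have h₂ : (s, k + 1) ∉ Set.Icc (lo, lo) (hi, hi) := by
      rw [mk_mem_Icc_iff]; have := hout (k + 1) (by linarith [hk.1]) (by linarith [hk.2]); omega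
    exact ⟨hR _ h₁ _ h₂ (by simp [VAdj, vdist]), hR _ h₂ _ h₁ (by simp [VAdj, vdist])⟩

theorem reflTransGen_corner_of_notMem_Icc
    (hR : ∀ a ∉ Set.Icc (lo, lo) (hi, hi), ∀ b ∉ Set.Icc (lo, lo) (hi, hi), VAdj a b → R a b)
    {a : ℤ × ℤ} (ha : a ∉ Set.Icc (lo, lo) (hi, hi)) : ReflTransGen R (hi + 1, lo) a := by
  obtain ⟨s, t⟩ := a
  rw [mk_mem_Icc_iff] at ha
  rcases lt_or_ge hi s with hs | hs
  · exact (reflTransGen_row hR lo _ s fun k _ _ => by omega).trans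
      (reflTransGen_column hR s _ t fun k _ _ => by omega)
  rcases lt_or_ge s lo with hs' | hs'
  · exact ((reflTransGen_column hR (hi + 1) _ (lo - 1) fun k _ _ => by omega).trans
      (reflTransGen_row hR (lo - 1) _ s fun k _ _ => by omega)).trans
      (reflTransGen_column hR s _ t fun k _ _ => by omega)
  · exact (reflTransGen_column hR (hi + 1) _ t fun k _ _ => by omega).trans
      (reflTransGen_row hR t _ s fun k _ _ => by omega)

theorem reflTransGen_of_notMem_Icc
    (hR : ∀ a ∉ Set.Icc (lo, lo) (hi, hi), ∀ b ∉ Set.Icc (lo, lo) (hi, hi), VAdj a b → R a b)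
    {a b : ℤ × ℤ} (ha : a ∉ Set.Icc (lo, lo) (hi, hi)) (hb : b ∉ Set.Icc (lo, lo) (hi, hi)) :
    ReflTransGen R a b := by
  have hR' : ∀ a ∉ Set.Icc (lo, lo) (hi, hi), ∀ b ∉ Set.Icc (lo, lo) (hi, hi),
      VAdj a b → Function.swap R a b := fun a ha b hb hab =>
    hR b hb a ha (by simp only [VAdj, vdist] at hab ⊢; omega)
  exact (reflTransGen_swap.mp (reflTransGen_corner_of_notMem_Icc hR' ha)).trans
    (reflTransGen_corner_of_notMem_Icc hR hb)

end Box

@[simp] theorem ep_false (x : Vx) : ep (x, false) = (x - (1, 1), x) := rfl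

@[simp] theorem ep_true (x : Vx) : ep (x, true) = (x - (1, 0), x - (0, 1)) := rfl

section Clusters

variable {η : SIConf} {p q : Face}

theorem OpenAdj.symm (h : OpenAdj η p q) : OpenAdj η q p :=
  let ⟨e, he, hpq⟩ := h; ⟨e, he, hpq.symm⟩

theorem ConnectedIn.symm (h : ConnectedIn η p q) : ConnectedIn η q p := by
  induction h with
  | refl => exact ReflTransGen.refl
  | tail _ hst ih => exact ih.head hst.symm

theorem cluster_eq_cluster_iff : cluster η p = cluster η q ↔ ConnectedIn η p q := by
  refine ⟨fun h => ?_, fun h => Set.ext fun r => ⟨h.symm.trans, h.trans⟩⟩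
  have hq : q ∈ cluster η q := ReflTransGen.refl
  rw [← h] at hq
  exact hq

theorem Compat.eq_of_connectedIn {σ : SpinConf} (hσ : Compat σ η) (h : ConnectedIn η p q) :
    σ p = σ q := by
  induction h with
  | refl => rfl
  | tail _ hst ih =>
    obtain ⟨e, he, hep | hep⟩ := hst <;> have := hσ e he <;> rw [hep] at this
    exacts [ih.trans this, ih.trans this.symm]

theorem compat_iff_ker_cluster_le {σ : SpinConf} :
    Compat σ η ↔ Setoid.ker (cluster η) ≤ Setoid.ker σ := by
  refine ⟨fun hσ => Setoid.le_def.mpr fun hpq => ?_, fun hσ e he => ?_⟩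
  · exact hσ.eq_of_connectedIn (cluster_eq_cluster_iff.mp (Setoid.ker_def.mp hpq))
  · exact Setoid.le_def.mp hσ (Setoid.ker_def.mpr
      (cluster_eq_cluster_iff.mpr (ReflTransGen.single ⟨e, he, Or.inl rfl⟩)))

theorem even_iff_of_openAdj (h : OpenAdj η p q) : Even (p.1 + p.2) ↔ Even (q.1 + q.2) := by
  obtain ⟨⟨x, b⟩, -, hep | hep⟩ := h <;> cases b <;>
    simp only [ep_false, ep_true, Prod.mk.injEq] at hep <;>
    obtain ⟨rfl, rfl⟩ := hep <;> simp only [Prod.fst_sub, Prod.snd_sub, Int.even_iff] <;> omega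

theorem even_iff_of_connectedIn (h : ConnectedIn η p q) :
    Even (p.1 + p.2) ↔ Even (q.1 + q.2) := by
  induction h with
  | refl => rfl
  | tail _ hst ih => exact ih.trans (even_iff_of_openAdj hst)

theorem iceRule_of_compat {σ : SpinConf} (hη : NoClosedCross η) (hσ : Compat σ η) :
    IceRule σ := fun x =>
  (hη x).imp (fun h => by simpa using hσ _ h) (fun h => by simpa using hσ _ h)

end Clusters

section Diamond

variable {v : Face} {n : ℕ} {η : SIConf} {p q : Face}

-- The two diagonals of a cross have the same total distance from `v`.
theorem fdist_add_fdist_le_of_mem_deltaOf {e : Edge} (he : e ∈ deltaOf v n) :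
    fdist (ep e).1 v + fdist (ep e).2 v ≤ 2 * n := by
  obtain ⟨x, b⟩ := e
  simp only [deltaOf, LEdgeAt, diamond, Set.mem_ofPred_eq] at he
  split_ifs at he <;> cases b <;>
    simp only [ep_true, ep_false, fdist, Prod.fst_sub, Prod.snd_sub] at he ⊢ <;> omega

theorem exists_ep_eq_of_natAbs_eq_one (h₁ : (p.1 - q.1).natAbs = 1)
    (h₂ : (p.2 - q.2).natAbs = 1) : ∃ e, ep e = (p, q) ∨ ep e = (q, p) := by
  rcases Int.natAbs_eq_iff.mp h₁ with h₁ | h₁ <;> rcases Int.natAbs_eq_iff.mp h₂ with h₂ | h₂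
  exacts [⟨(p, false), .inr (by ext <;> simp <;> omega)⟩,
    ⟨(p + (0, 1), true), .inr (by ext <;> simp <;> omega)⟩,
    ⟨(p + (1, 0), true), .inl (by ext <;> simp <;> omega)⟩,
    ⟨(q, false), .inl (by ext <;> simp <;> omega)⟩]

theorem openAdj_of_far (hopen : ∀ e ∉ deltaOf v n, η e = true)
    (h₁ : (p.1 - q.1).natAbs = 1) (h₂ : (p.2 - q.2).natAbs = 1)
    (hfar : 2 * n < fdist p v + fdist q v) : OpenAdj η p q := by
  obtain ⟨e, he⟩ := exists_ep_eq_of_natAbs_eq_one h₁ h₂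
  refine ⟨e, hopen e fun hΔ => ?_, he⟩
  have := fdist_add_fdist_le_of_mem_deltaOf hΔ
  rcases he with he | he <;> simp only [he] at this <;> omega

theorem exists_openAdj_fdist_eq_add_two (hopen : ∀ e ∉ deltaOf v n, η e = true)
    (hp : n ≤ fdist p v) : ∃ q, OpenAdj η p q ∧ fdist q v = fdist p v + 2 := by
  let q : Face := p + (if v.1 ≤ p.1 then 1 else -1, if v.2 ≤ p.2 then 1 else -1)
  have hq : fdist q v = fdist p v + 2 := by
    simp only [q, fdist, Prod.fst_add, Prod.snd_add]; split_ifs <;> omega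
  refine ⟨q, openAdj_of_far hopen ?_ ?_ (by omega), hq⟩ <;>
    simp only [q, Prod.fst_add, Prod.snd_add] <;> split_ifs <;> omega

theorem connectedIn_of_add_two_le_fdist (hopen : ∀ e ∉ deltaOf v n, η e = true) (hn : Even n)
    (hpq : Even (p.1 + p.2) ↔ Even (q.1 + q.2)) (hp : n + 2 ≤ fdist p v)
    (hq : n + 2 ≤ fdist q v) : ConnectedIn η p q := by
  obtain ⟨m, hm⟩ := hn
  -- rotating by 45° turns diagonal steps between faces of one parity into unit steps of `ℤ²`,
  -- and the faces beyond distance `n + 2` into the complement of a square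
  set c : ℤ := (p.1 + p.2 - v.1 - v.2) % 2
  let φ : ℤ × ℤ → Face := fun a => v + (a.1 + a.2 + c, a.1 - a.2)
  have hφ : ∀ r : Face, (Even (r.1 + r.2) ↔ Even (p.1 + p.2)) → n + 2 ≤ fdist r v →
      ∃ a ∉ Set.Icc (-m - c, -m - c) (m, m), φ a = r := fun r hr hrv => by
    simp only [Int.even_iff] at hr
    refine ⟨((r.1 - v.1 + r.2 - v.2 - c) / 2, (r.1 - v.1 - r.2 + v.2 - c) / 2), ?_, ?_⟩
    · rw [mk_mem_Icc_iff]; simp only [fdist] at hrv; omega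
    · simp only [φ, Prod.ext_iff, Prod.fst_add, Prod.snd_add]; omega
  have hR : ∀ a ∉ Set.Icc (-m - c, -m - c) (m, m), ∀ b ∉ Set.Icc (-m - c, -m - c) (m, m),
      VAdj a b → OpenAdj η (φ a) (φ b) := by
    rintro ⟨a₁, a₂⟩ ha ⟨b₁, b₂⟩ hb hab
    rw [mk_mem_Icc_iff] at ha hb
    simp only [VAdj, vdist] at hab
    apply openAdj_of_far hopen <;> simp only [φ, fdist, Prod.fst_add, Prod.snd_add] <;> omega
  obtain ⟨a, ha, hpa⟩ := hφ p Iff.rfl hp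
  obtain ⟨b, hb, hqb⟩ := hφ q hpq.symm hq
  rw [← hpa, ← hqb]
  exact ReflTransGen.lift φ (fun _ _ h => h) a b (reflTransGen_of_notMem_Icc hR ha hb)

theorem connectedIn_of_le_fdist (hopen : ∀ e ∉ deltaOf v n, η e = true) (hn : Even n)
    (hpq : Even (p.1 + p.2) ↔ Even (q.1 + q.2)) (hp : n ≤ fdist p v) (hq : n ≤ fdist q v) :
    ConnectedIn η p q := by
  obtain ⟨p', hpp', hp'⟩ := exists_openAdj_fdist_eq_add_two hopen hp
  obtain ⟨q', hqq', hq'⟩ := exists_openAdj_fdist_eq_add_two hopen hq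
  have hpq' : Even (p'.1 + p'.2) ↔ Even (q'.1 + q'.2) :=
    (even_iff_of_openAdj hpp').symm.trans (hpq.trans (even_iff_of_openAdj hqq'))
  exact ((ReflTransGen.single hpp').trans
    (connectedIn_of_add_two_le_fdist hopen hn hpq' (by omega) (by omega))).trans
    (ReflTransGen.single hqq'.symm)

theorem touchesDelta_of_fdist_lt (hv : Even (v.1 + v.2)) (hn : Even n) (hp : fdist p v < n) :
    TouchesDelta (deltaOf v n) p := by
  refine if hpe : Even (p.1 + p.2) then ⟨(p + (1, 1), false), ?_, Or.inl (by simp)⟩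
    else ⟨(p, false), ?_, Or.inr rfl⟩
  all_goals
    obtain ⟨m, hm⟩ := hn
    simp only [deltaOf, LEdgeAt, diamond, Set.mem_ofPred_eq, Int.even_iff] at hv hpe ⊢
    split_ifs <;> simp only [ep_true, ep_false, fdist, Prod.fst_sub, Prod.snd_sub, Prod.fst_add,
      Prod.snd_add] at * <;> omega

/-- A face of the inner boundary of the diamond; together with the face `outerAnchor v n` of the
outer boundary it is incident to the cross at the vertex `outerAnchor v n`, which lies in `Δ(Λ)`. -/
def innerAnchor (v : Face) (n : ℕ) : Face := v + ((n : ℤ), 0)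

def outerAnchor (v : Face) (n : ℕ) : Face := v + ((n : ℤ), 1)

theorem fdist_innerAnchor (v : Face) (n : ℕ) : fdist (innerAnchor v n) v = n := by
  simp [innerAnchor, fdist]

theorem fdist_outerAnchor (v : Face) (n : ℕ) : fdist (outerAnchor v n) v = n + 1 := by
  simp only [outerAnchor, fdist, Prod.fst_add, Prod.snd_add]; omega

theorem even_innerAnchor (hv : Even (v.1 + v.2)) (hn : Even n) :
    Even ((innerAnchor v n).1 + (innerAnchor v n).2) := by
  obtain ⟨m, rfl⟩ := hn
  simp only [innerAnchor, Int.even_iff, Prod.fst_add, Prod.snd_add] at hv ⊢; omega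

theorem not_even_outerAnchor (hv : Even (v.1 + v.2)) (hn : Even n) :
    ¬ Even ((outerAnchor v n).1 + (outerAnchor v n).2) := by
  obtain ⟨m, rfl⟩ := hn
  simp only [outerAnchor, Int.even_iff, Prod.fst_add, Prod.snd_add] at hv ⊢; omega

theorem outerAnchor_mem_deltaOf (hv : Even (v.1 + v.2)) (hn : Even n) (hn₀ : 0 < n) (b : Bool) :
    (outerAnchor v n, b) ∈ deltaOf v n := by
  obtain ⟨m, hm⟩ := hn
  simp only [deltaOf, LEdgeAt, diamond, Set.mem_ofPred_eq, Int.even_iff] at hv ⊢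
  split_ifs <;> simp only [outerAnchor, ep_true, ep_false, fdist, Prod.fst_sub, Prod.snd_sub,
    Prod.fst_add, Prod.snd_add] at * <;> omega

theorem touchesDelta_innerAnchor (hv : Even (v.1 + v.2)) (hn : Even n) (hn₀ : 0 < n) :
    TouchesDelta (deltaOf v n) (innerAnchor v n) :=
  ⟨_, outerAnchor_mem_deltaOf hv hn hn₀ true, Or.inr (by ext <;> simp [innerAnchor, outerAnchor])⟩

theorem touchesDelta_outerAnchor (hv : Even (v.1 + v.2)) (hn : Even n) (hn₀ : 0 < n) :
    TouchesDelta (deltaOf v n) (outerAnchor v n) :=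
  ⟨_, outerAnchor_mem_deltaOf hv hn hn₀ false, Or.inr rfl⟩

theorem connectedIn_innerAnchor (hopen : ∀ e ∉ deltaOf v n, η e = true) (hv : Even (v.1 + v.2))
    (hn : Even n) (hpe : Even (p.1 + p.2)) (hp : n ≤ fdist p v) :
    ConnectedIn η p (innerAnchor v n) :=
  connectedIn_of_le_fdist hopen hn (iff_of_true hpe (even_innerAnchor hv hn)) hp
    (fdist_innerAnchor v n).ge

theorem connectedIn_outerAnchor (hopen : ∀ e ∉ deltaOf v n, η e = true) (hv : Even (v.1 + v.2))
    (hn : Even n) (hpo : ¬ Even (p.1 + p.2)) (hp : n ≤ fdist p v) :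
    ConnectedIn η p (outerAnchor v n) :=
  connectedIn_of_le_fdist hopen hn (iff_of_false hpo (not_even_outerAnchor hv hn)) hp
    (by rw [fdist_outerAnchor]; omega)

theorem exists_touchesDelta_connectedIn (hopen : ∀ e ∉ deltaOf v n, η e = true)
    (hv : Even (v.1 + v.2)) (hn : Even n) (hn₀ : 0 < n) (p : Face) :
    ∃ q, fdist q v ≤ n + 1 ∧ TouchesDelta (deltaOf v n) q ∧ ConnectedIn η p q := by
  rcases lt_or_ge (fdist p v) n with hp | hp
  · exact ⟨p, by omega, touchesDelta_of_fdist_lt hv hn hp, ReflTransGen.refl⟩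
  by_cases hpe : Even (p.1 + p.2)
  · exact ⟨_, by rw [fdist_innerAnchor]; omega, touchesDelta_innerAnchor hv hn hn₀,
      connectedIn_innerAnchor hopen hv hn hpe hp⟩
  · exact ⟨_, (fdist_outerAnchor v n).le, touchesDelta_outerAnchor hv hn hn₀,
      connectedIn_outerAnchor hopen hv hn hpe hp⟩

end Diamond

section Counting

variable {v : Face} {n : ℕ} {η : SIConf}

theorem finite_range_cluster (hopen : ∀ e ∉ deltaOf v n, η e = true) (hv : Even (v.1 + v.2))
    (hn : Even n) (hn₀ : 0 < n) : (Set.range (cluster η)).Finite := by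
  refine ((Set.finite_Icc (v - ((n : ℤ) + 1, (n : ℤ) + 1)) (v + ((n : ℤ) + 1, (n : ℤ) + 1))).image
    (cluster η)).subset ?_
  rintro _ ⟨p, rfl⟩
  obtain ⟨q, hq, -, hpq⟩ := exists_touchesDelta_connectedIn hopen hv hn hn₀ p
  refine ⟨q, ?_, cluster_eq_cluster_iff.mpr hpq.symm⟩
  simp only [fdist] at hq
  simp only [Set.mem_Icc, Prod.le_def, Prod.fst_sub, Prod.snd_sub, Prod.fst_add, Prod.snd_add]
  omega

theorem kDelta_deltaOf_eq_ncard_range (hopen : ∀ e ∉ deltaOf v n, η e = true)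
    (hv : Even (v.1 + v.2)) (hn : Even n) (hn₀ : 0 < n) :
    kDelta (deltaOf v n) η = (Set.range (cluster η)).ncard := by
  refine congrArg Set.ncard (Set.ext fun C => ⟨?_, ?_⟩)
  · rintro ⟨p, -, rfl⟩
    exact ⟨p, rfl⟩
  · rintro ⟨p, rfl⟩
    obtain ⟨q, -, hq, hpq⟩ := exists_touchesDelta_connectedIn hopen hv hn hn₀ p
    exact ⟨q, hq, cluster_eq_cluster_iff.mpr hpq⟩

theorem omegaSpin_and_compat_iff (hη : SIok (deltaOf v n) wiredwired η) (hv : Even (v.1 + v.2))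
    (hn : Even n) {i j : Bool} {σ : SpinConf} :
    OmegaSpin v n i j σ ∧ Compat σ η ↔ Setoid.ker (cluster η) ≤ Setoid.ker σ ∧
      σ (innerAnchor v n) = j ∧ σ (outerAnchor v n) = i := by
  rw [← compat_iff_ker_cluster_le]
  constructor
  · rintro ⟨⟨-, hbd⟩, hσ⟩
    refine ⟨hσ, ?_, ?_⟩
    · rw [hbd _ (fdist_innerAnchor v n).ge, if_pos (even_innerAnchor hv hn)]
    · rw [hbd _ (by rw [fdist_outerAnchor]; omega), if_neg (not_even_outerAnchor hv hn)]
  · rintro ⟨hσ, hj, hi⟩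
    refine ⟨⟨iceRule_of_compat hη.1 hσ, fun p hp => ?_⟩, hσ⟩
    split_ifs with hpe
    · rw [← hj]; exact hσ.eq_of_connectedIn (connectedIn_innerAnchor hη.2 hv hn hpe hp)
    · rw [← hi]; exact hσ.eq_of_connectedIn (connectedIn_outerAnchor hη.2 hv hn hpe hp)

end Counting

/-- Let `Λ` be a diamond domain, `Δ = Δ(Λ)` and `i, j ∈ {+,-}`.  For every superimposed
configuration `η ∈ Ω^{SI,11}_Δ`, the number of spin configurations `σ ∈ Ω^{spin,ij}_Λ`
compatible with `η` equals `2^{k_Δ(η) - 2}`. -/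
theorem stmt_11 (v : Face) (n : ℕ) (hΛ : IsDiamond v n) (i j : Bool)
    (η : SIConf) (hη : SIok (deltaOf v n) wiredwired η) :
    Set.ncard {σ : SpinConf | OmegaSpin v n i j σ ∧ Compat σ η} =
      2 ^ (kDelta (deltaOf v n) η - 2) := by
  obtain ⟨hv, hn₀, hn⟩ := hΛ
  have hopen : ∀ e ∉ deltaOf v n, η e = true := hη.2
  have : Finite (Quotient (Setoid.ker (cluster η))) :=
    have := (finite_range_cluster hopen hv hn hn₀).to_subtype
    .of_equiv _ (Setoid.quotientKerEquivRange _).symm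
  have hsep : ¬ Setoid.ker (cluster η) (innerAnchor v n) (outerAnchor v n) := fun h =>
    not_even_outerAnchor hv hn <| (even_iff_of_connectedIn (cluster_eq_cluster_iff.mp h)).mp <|
      even_innerAnchor hv hn
  calc Set.ncard {σ : SpinConf | OmegaSpin v n i j σ ∧ Compat σ η}
      = Nat.card {σ : SpinConf // Setoid.ker (cluster η) ≤ Setoid.ker σ ∧
          σ (innerAnchor v n) = j ∧ σ (outerAnchor v n) = i} :=
        (Nat.card_coe_set_eq _).symm.trans
          (Nat.card_congr (Equiv.subtypeEquivRight fun _ => omegaSpin_and_compat_iff hη hv hn))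
    _ = 2 ^ (Nat.card (Quotient (Setoid.ker (cluster η))) - 2) := by
        rw [Setoid.card_subtype_le_ker_and_apply_eq _ hsep, Nat.card_eq_fintype_card,
          Fintype.card_bool]
    _ = 2 ^ (kDelta (deltaOf v n) η - 2) := by
        rw [kDelta_deltaOf_eq_ncard_range hopen hv hn hn₀, ← Nat.card_coe_set_eq,
          Nat.card_congr (Setoid.quotientKerEquivRange _)]

end SixVertex
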